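/- arXiv:2102.01179 — 2 statements merged into one kernel-verified Lean document; each statement's English description precedes it below -/
import Mathlib

section
/- Let A be a commutative noetherian ring, M an A-module, and N, H submodules of M with N ⊓ H = ⊥, N ⊔ H = ⊤, and N distributive (a lattice decomposition M = N ⊕ H). Let E₁ and E₂ be injective A-modules and suppose there are injective A-linear maps N → E₁ and H → E₂ whose ranges are essential submodules of E₁ and E₂ respectively. Then in the product module E₁ × E₂, the submodule E₁ × {0} is distributive (with complement {0} × E₂), i.e., E(M) = E(N) ⊕ E(H) is a lattice decomposition. -/
/-!
Distributivity of `N` forces every cyclic submodule `A ∙ (n + h)` to split along `N ⊕ H`, which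
makes the annihilators of any `n ∈ N` and `h ∈ H` comaximal. Over a noetherian ring an element
whose annihilator lies in a prime `q` yields an element with prime annihilator inside `q`, and
essentiality pulls such an element back into `N` (resp. `H`). Hence the annihilators of the
two components of any `v ∈ E₁ × E₂` are comaximal too, so every submodule of `E₁ × E₂`
contains `(v.1, 0)` with `v`, and this is exactly distributivity of `E₁ × 0`.
-/

/-- A submodule `N ⊆ M` is distributive if the sublattice of `𝓛(M)` generated by `N` and any
two submodules is distributive. -/
def IsDistribSubmodule {R M : Type*} [Ring R] [AddCommGroup M] [Module R M]
    (N : Submodule R M) : Prop :=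
  ∀ Y₁ Y₂ : Submodule R M, N ⊔ (Y₁ ⊓ Y₂) = (N ⊔ Y₁) ⊓ (N ⊔ Y₂)

open Ideal

section Torsion

variable {R M : Type*} [CommRing R] [AddCommGroup M] [Module R M]

theorem torsionOf_le_torsionOf_map {M' : Type*} [AddCommGroup M'] [Module R M']
    (φ : M →ₗ[R] M') (x : M) : torsionOf R M x ≤ torsionOf R M' (φ x) := fun a ha => by
  rw [mem_torsionOf_iff] at ha ⊢
  rw [← map_smul, ha, map_zero]

theorem torsionOf_le_torsionOf_smul (a : R) (x : M) : torsionOf R M x ≤ torsionOf R M (a • x) :=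
  fun u hu => by
    rw [mem_torsionOf_iff] at hu ⊢
    rw [smul_comm, hu, smul_zero]

theorem torsionOf_smul_eq_of_isPrime {x : M} (hx : (torsionOf R M x).IsPrime) {a : R}
    (ha : a • x ≠ 0) : torsionOf R M (a • x) = torsionOf R M x := by
  refine le_antisymm (fun u hu => ?_) (torsionOf_le_torsionOf_smul a x)
  rw [mem_torsionOf_iff, smul_smul] at hu
  exact (hx.mem_or_mem hu).resolve_right ha

theorem exists_isPrime_torsionOf_le [IsNoetherianRing R] {q : Ideal R} (hq : q.IsPrime)
    {e : M} (he : torsionOf R M e ≤ q) :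
    ∃ x : M, (torsionOf R M x).IsPrime ∧ torsionOf R M x ≤ q := by
  obtain ⟨_, ⟨hxq, x, rfl⟩, hmax⟩ := set_has_maximal_iff_noetherian.mpr inferInstance
    {I | I ≤ q ∧ ∃ x : M, I = torsionOf R M x} ⟨_, he, e, rfl⟩
  have eq_of_le (c : R) (hc : torsionOf R M (c • x) ≤ q) :
      torsionOf R M (c • x) = torsionOf R M x :=
    ((torsionOf_le_torsionOf_smul c x).eq_of_not_lt (hmax _ ⟨hc, _, rfl⟩)).symm
  refine ⟨x, ⟨fun htop => hq.ne_top (top_le_iff.mp (htop ▸ hxq)), fun {a b} hab => ?_⟩,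
    hxq⟩
  by_cases hb : torsionOf R M (b • x) ≤ q
  · left
    rwa [← eq_of_le b hb, mem_torsionOf_iff, smul_smul]
  · obtain ⟨s, hs, hsq⟩ := SetLike.not_le_iff_exists.mp hb
    have hsx : torsionOf R M (s • x) ≤ q := fun u hu => by
      rw [mem_torsionOf_iff, smul_smul] at hu
      exact (hq.mem_or_mem (hxq hu)).resolve_right hsq
    right
    rw [← eq_of_le s hsx, mem_torsionOf_iff, smul_comm]
    exact hs

theorem exists_mem_torsionOf_le_of_essential [IsNoetherianRing R] {K : Submodule R M}
    (hK : ∀ X : Submodule R M, X ≠ ⊥ → K ⊓ X ≠ ⊥) {q : Ideal R} (hq : q.IsPrime)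
    {e : M} (he : torsionOf R M e ≤ q) : ∃ k ∈ K, torsionOf R M k ≤ q := by
  obtain ⟨x, hxp, hxq⟩ := exists_isPrime_torsionOf_le hq he
  have hx : x ≠ 0 := by
    rintro rfl
    exact hxp.ne_top (torsionOf_zero R M)
  obtain ⟨k, ⟨hkK, hkx⟩, hk⟩ :=
    (Submodule.ne_bot_iff _).mp (hK _ (Submodule.span_singleton_eq_bot.not.mpr hx))
  obtain ⟨a, rfl⟩ := Submodule.mem_span_singleton.mp hkx
  exact ⟨_, hkK, (torsionOf_smul_eq_of_isPrime hxp hk).le.trans hxq⟩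

end Torsion

namespace IsDistribSubmodule

variable {R M : Type*} [AddCommGroup M]

theorem inf_sup_inf_eq [Ring R] [Module R M] {N H : Submodule R M} (hN : IsDistribSubmodule N)
    (hsup : N ⊔ H = ⊤) (Y : Submodule R M) : Y ⊓ N ⊔ Y ⊓ H = Y := by
  have hNY : N ⊔ Y ⊓ H = N ⊔ Y := by rw [hN, hsup, inf_top_eq]
  calc Y ⊓ N ⊔ Y ⊓ H = (Y ⊓ H ⊔ N) ⊓ Y := by
        rw [sup_inf_assoc_of_le N inf_le_left, inf_comm N, sup_comm]
    _ = Y := by rw [sup_comm, hNY, inf_of_le_right le_sup_right]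

theorem torsionOf_sup_torsionOf_eq_top [CommRing R] [Module R M] {N H : Submodule R M}
    (hN : IsDistribSubmodule N) (hdisj : N ⊓ H = ⊥) (hsup : N ⊔ H = ⊤) (n : N) (h : H) :
    torsionOf R N n ⊔ torsionOf R H h = ⊤ := by
  have hmem := Submodule.mem_span_singleton_self (R := R) ((n : M) + h)
  rw [← hN.inf_sup_inf_eq hsup (R ∙ ((n : M) + h))] at hmem
  obtain ⟨u, ⟨hu, huN⟩, v, ⟨-, hvH⟩, huv⟩ := Submodule.mem_sup.mp hmem
  have hnu : (n : M) = u := by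
    have hdiff : (n : M) - u = v - h := by rw [sub_eq_sub_iff_add_eq_add, add_comm v, huv]
    have : (n : M) - u ∈ N ⊓ H := ⟨N.sub_mem n.2 huN, hdiff ▸ H.sub_mem hvH h.2⟩
    rwa [hdisj, Submodule.mem_bot, sub_eq_zero] at this
  obtain ⟨a, ha⟩ := Submodule.mem_span_singleton.mp hu
  rw [← hnu] at ha
  have hswap : (1 - a) • (n : M) = a • (h : M) := by
    rw [sub_smul, one_smul, sub_eq_iff_eq_add', ← smul_add, ha]
  have hzero : (1 - a) • (n : M) = 0 := by
    rw [← Submodule.mem_bot R, ← hdisj]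
    exact ⟨N.smul_mem _ n.2, hswap ▸ H.smul_mem _ h.2⟩
  rw [eq_top_iff_one, Submodule.mem_sup]
  refine ⟨1 - a, ?_, a, ?_, sub_add_cancel 1 a⟩
  · rw [mem_torsionOf_iff, ← Subtype.coe_inj]
    exact hzero
  · rw [mem_torsionOf_iff, ← Subtype.coe_inj]
    exact hswap.symm.trans hzero

end IsDistribSubmodule

section Prod

variable {R M₁ M₂ : Type*} [AddCommGroup M₁] [AddCommGroup M₂]

theorem mk_fst_zero_mem_of_torsionOf_sup_eq_top [CommRing R] [Module R M₁] [Module R M₂]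
    {Y : Submodule R (M₁ × M₂)} {v : M₁ × M₂} (hv : v ∈ Y)
    (h : torsionOf R M₁ v.1 ⊔ torsionOf R M₂ v.2 = ⊤) : (v.1, (0 : M₂)) ∈ Y := by
  obtain ⟨a, ha, b, hb, hab⟩ := Submodule.mem_sup.mp (h ▸ Submodule.mem_top : (1 : R) ∈ _)
  rw [mem_torsionOf_iff] at ha hb
  convert Y.smul_mem b hv using 1
  ext
  · rw [Prod.smul_fst, ← sub_eq_of_eq_add' hab.symm, sub_smul, one_smul, ha, sub_zero]
  · exact hb.symm

theorem mem_fst_sup_iff [Ring R] [Module R M₁] [Module R M₂] {Y : Submodule R (M₁ × M₂)}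
    (hY : ∀ v ∈ Y, (v.1, (0 : M₂)) ∈ Y) {v : M₁ × M₂} :
    v ∈ Submodule.fst R M₁ M₂ ⊔ Y ↔ ((0 : M₁), v.2) ∈ Y := by
  constructor
  · intro hv
    obtain ⟨w, hw, u, hu, rfl⟩ := Submodule.mem_sup.mp hv
    have hw₂ : w.2 = 0 := (Submodule.mem_bot R).mp hw
    convert Y.sub_mem hu (hY u hu) using 1
    ext <;> simp [hw₂]
  · intro hv
    exact Submodule.mem_sup.mpr ⟨(v.1, 0), (Submodule.mem_bot R).mpr rfl, _, hv, by simp⟩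

theorem isDistribSubmodule_fst_of_torsionOf_sup_eq_top [CommRing R] [Module R M₁] [Module R M₂]
    (h : ∀ v : M₁ × M₂, torsionOf R M₁ v.1 ⊔ torsionOf R M₂ v.2 = ⊤) :
    IsDistribSubmodule (Submodule.fst R M₁ M₂) := by
  have hY (Y : Submodule R (M₁ × M₂)) : ∀ v ∈ Y, (v.1, (0 : M₂)) ∈ Y :=
    fun v hv => mk_fst_zero_mem_of_torsionOf_sup_eq_top hv (h v)
  intro Y₁ Y₂
  ext v
  simp only [Submodule.mem_inf, mem_fst_sup_iff (hY _)]

end Prod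

theorem injectiveHull_lattice_decomposition_general {A M E₁ E₂ : Type*} [CommRing A]
    [IsNoetherianRing A] [AddCommGroup M] [Module A M]
    [AddCommGroup E₁] [Module A E₁] [AddCommGroup E₂] [Module A E₂]
    (N H : Submodule A M) (hdisj : N ⊓ H = ⊥) (hsup : N ⊔ H = ⊤)
    (hdist : IsDistribSubmodule N)
    (f : N →ₗ[A] E₁)
    (hfe : ∀ X : Submodule A E₁, X ≠ ⊥ → LinearMap.range f ⊓ X ≠ ⊥)
    (g : H →ₗ[A] E₂)
    (hge : ∀ X : Submodule A E₂, X ≠ ⊥ → LinearMap.range g ⊓ X ≠ ⊥) :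
    IsDistribSubmodule (Submodule.fst A E₁ E₂) := by
  refine isDistribSubmodule_fst_of_torsionOf_sup_eq_top fun v => ?_
  by_contra hne
  obtain ⟨q, hq, hle⟩ := Ideal.exists_le_maximal _ hne
  obtain ⟨_, ⟨n, rfl⟩, hn⟩ :=
    exists_mem_torsionOf_le_of_essential hfe hq.isPrime (le_sup_left.trans hle)
  obtain ⟨_, ⟨h, rfl⟩, hh⟩ :=
    exists_mem_torsionOf_le_of_essential hge hq.isPrime (le_sup_right.trans hle)
  refine hq.ne_top (top_le_iff.mp ?_)
  rw [← hdist.torsionOf_sup_torsionOf_eq_top hdisj hsup n h]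
  exact sup_le ((torsionOf_le_torsionOf_map f n).trans hn)
    ((torsionOf_le_torsionOf_map g h).trans hh)

/-- Over a commutative noetherian ring, a lattice decomposition `M = N ⊕ H` induces a lattice
decomposition `E(M) = E(N) ⊕ E(H)` of injective hulls. -/
theorem injectiveHull_lattice_decomposition {A M E₁ E₂ : Type*} [CommRing A]
    [IsNoetherianRing A] [AddCommGroup M] [Module A M]
    [AddCommGroup E₁] [Module A E₁] [AddCommGroup E₂] [Module A E₂]
    (N H : Submodule A M) (hdisj : N ⊓ H = ⊥) (hsup : N ⊔ H = ⊤)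
    (hdist : IsDistribSubmodule N)
    (hE₁ : Module.Injective A E₁) (hE₂ : Module.Injective A E₂)
    (f : N →ₗ[A] E₁) (hf : Function.Injective f)
    (hfe : ∀ X : Submodule A E₁, X ≠ ⊥ → LinearMap.range f ⊓ X ≠ ⊥)
    (g : H →ₗ[A] E₂) (hg : Function.Injective g)
    (hge : ∀ X : Submodule A E₂, X ≠ ⊥ → LinearMap.range g ⊓ X ≠ ⊥) :
    IsDistribSubmodule (Submodule.fst A E₁ E₂) :=
  injectiveHull_lattice_decomposition_general N H hdisj hsup hdist f hfe g hge
end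

section
/- Let A be a commutative ring, M an A-module, and N a submodule of M. Then the following are equivalent: (a) N is a complemented distributive submodule of M; (b) there exists an A-linear endomorphism e : M → M with e ∘ e = e, range(e) = N, e central in the endomorphism ring of M, and e belonging to the closure of the image of A in End_A(M) in the finite topology, i.e., for every finite list of elements m₁, …, m_t ∈ M there exists a ∈ A such that e(mᵢ) = a • mᵢ for all i = 1, …, t. -/
open LinearMap Submodule

def IsInScalarClosure {A M : Type*} [CommRing A] [AddCommGroup M] [Module A M]
    (e : M →ₗ[A] M) : Prop :=
  ∀ s : Finset M, ∃ a : A, ∀ m ∈ s, e m = a • m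

section Ring

variable {R M : Type*} [Ring R] [AddCommGroup M] [Module R M] {e : M →ₗ[R] M}

theorem IsIdempotentElem.sub_apply_mem_of_mem_range_sup (he : IsIdempotentElem e)
    (hinv : ∀ m, e m ∈ R ∙ m) {Y : Submodule R M} {x : M} (hx : x ∈ range e ⊔ Y) :
    x - e x ∈ Y := by
  obtain ⟨n, hn, y, hy, rfl⟩ := mem_sup.1 hx
  have hey : e y ∈ Y := span_singleton_le_iff_mem _ _ |>.2 hy (hinv y)
  rw [map_add, he.mem_range_iff.1 hn, add_sub_add_left_eq_sub]
  exact sub_mem hy hey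

theorem IsIdempotentElem.isDistribSubmodule_range (he : IsIdempotentElem e)
    (hinv : ∀ m, e m ∈ R ∙ m) : IsDistribSubmodule (range e) := by
  refine fun Y₁ Y₂ ↦ le_antisymm sup_inf_le fun x hx ↦ mem_sup.2 ?_
  exact ⟨e x, mem_range_self e x, x - e x,
    ⟨he.sub_apply_mem_of_mem_range_sup hinv hx.1, he.sub_apply_mem_of_mem_range_sup hinv hx.2⟩,
    add_sub_cancel _ _⟩

end Ring

section CommRing

variable {A M : Type*} [CommRing A] [AddCommGroup M] [Module A M]

theorem IsDistribSubmodule.annihilator_sup_eq_top {N H : Submodule A M}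
    (hN : IsDistribSubmodule N) (hc : IsCompl N H) {n h : M} (hn : n ∈ N) (hh : h ∈ H) :
    (A ∙ n).annihilator ⊔ (A ∙ h).annihilator = ⊤ := by
  have hmem : h ∈ N ⊔ ((A ∙ (n + h)) ⊓ H) := by
    rw [hN, hc.sup_eq_top, inf_top_eq]
    exact mem_sup.2 ⟨-n, neg_mem hn, n + h, mem_span_singleton_self _, neg_add_cancel_left n h⟩
  obtain ⟨y, hy, _, ⟨hz, hzH⟩, hyz⟩ := mem_sup.1 hmem
  obtain ⟨c, rfl⟩ := mem_span_singleton.1 hz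
  have mem_inf_eq_zero {x : M} (hxN : x ∈ N) (hxH : x ∈ H) : x = 0 :=
    disjoint_def.1 hc.disjoint x hxN hxH
  have hcn : c • n = 0 := by
    refine mem_inf_eq_zero (N.smul_mem c hn) ?_
    rw [← add_sub_cancel_right (c • n) (c • h), ← smul_add]
    exact sub_mem hzH (H.smul_mem c hh)
  have hch : c • h = h := by
    have hy0 : y = 0 := mem_inf_eq_zero hy (eq_sub_of_add_eq hyz ▸ sub_mem hh hzH)
    rwa [hy0, zero_add, smul_add, hcn, zero_add] at hyz
  rw [Ideal.eq_top_iff_one]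
  refine mem_sup.2 ⟨c, (mem_annihilator_span_singleton _ _).2 hcn, 1 - c, ?_, add_sub_cancel _ _⟩
  rw [mem_annihilator_span_singleton, sub_smul, one_smul, hch, sub_self]

theorem IsIdempotentElem.isInScalarClosure {e : M →ₗ[A] M} (he : IsIdempotentElem e)
    (hd : IsDistribSubmodule (range e)) : IsInScalarClosure e := by
  intro s
  have hker (m : M) : m - e m ∈ ker e := by
    rw [mem_ker, map_sub, ← Module.End.mul_apply, he.eq, sub_self]
  have hcomax : (⨅ m ∈ s, (A ∙ e m).annihilator) ⊔ (⨅ m ∈ s, (A ∙ (m - e m)).annihilator) = ⊤ :=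
    Ideal.iInf_sup_eq_top fun m _ ↦ Ideal.sup_iInf_eq_top fun m' _ ↦
      hd.annihilator_sup_eq_top he.isCompl (mem_range_self e m) (hker m')
  obtain ⟨a, ha, b, hb, hab⟩ := mem_sup.1 ((Ideal.eq_top_iff_one _).1 hcomax)
  simp only [mem_iInf, mem_annihilator_span_singleton] at ha hb
  refine ⟨b, fun m hm ↦ ?_⟩
  calc e m = (a + b) • e m := by rw [hab, one_smul]
    _ = b • e m + b • (m - e m) := by rw [add_smul, ha m hm, hb m hm, zero_add, add_zero]
    _ = b • m := by rw [← smul_add, add_sub_cancel]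

theorem IsInScalarClosure.comp_comm {e : M →ₗ[A] M} (he : IsInScalarClosure e)
    (f : M →ₗ[A] M) : e ∘ₗ f = f ∘ₗ e := by
  classical
  ext m
  obtain ⟨a, ha⟩ := he {m, f m}
  simp only [comp_apply, ha (f m) (by simp), ha m (by simp), map_smul]

theorem IsInScalarClosure.apply_mem_span_singleton {e : M →ₗ[A] M} (he : IsInScalarClosure e)
    (m : M) : e m ∈ A ∙ m :=
  have ⟨a, ha⟩ := he {m}
  mem_span_singleton.2 ⟨a, (ha m (Finset.mem_singleton_self m)).symm⟩

end CommRing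

/-- Over a commutative ring `A`, a submodule `N ⊆ M` is complemented distributive iff it is the
image of a central idempotent endomorphism lying in the closure of `A` in `End_A(M)` with
respect to the finite topology. -/
theorem complemented_distrib_iff_closure_finite_topology {A M : Type*} [CommRing A]
    [AddCommGroup M] [Module A M] (N : Submodule A M) :
    (IsDistribSubmodule N ∧ ∃ H : Submodule A M, N ⊓ H = ⊥ ∧ N ⊔ H = ⊤) ↔
      ∃ e : M →ₗ[A] M, e ∘ₗ e = e ∧ LinearMap.range e = N ∧
        (∀ f : M →ₗ[A] M, e ∘ₗ f = f ∘ₗ e) ∧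
        (∀ s : Finset M, ∃ a : A, ∀ m ∈ s, e m = a • m) := by
  constructor
  · rintro ⟨hd, H, hinf, hsup⟩
    have hc : IsCompl N H := ⟨disjoint_iff.2 hinf, codisjoint_iff.2 hsup⟩
    have he := isIdempotentElem_projection hc
    have hcl := he.isInScalarClosure (by rwa [range_projection])
    exact ⟨_, he, range_projection hc, hcl.comp_comm, hcl⟩
  · rintro ⟨e, he : IsIdempotentElem e, rfl, -, hcl : IsInScalarClosure e⟩
    exact ⟨he.isDistribSubmodule_range hcl.apply_mem_span_singleton, ker e,
      he.isCompl.inf_eq_bot, he.isCompl.sup_eq_top⟩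
end
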